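/- For every n ≥ 1, let A_n denote the number of vectors (ε_1, …, ε_n) ∈ (ZMod 2)ⁿ that are augmentation vectors, i.e. for which the (0,0) entry of the ordered product M(ε_1)·M(ε_2)⋯M(ε_n) equals 1. Then, as an identity of integers, 3·A_n = 2^{n+1} − (−1)^{n+1}. -/
import Mathlib

/-- The matrix `M(a) = [[a,1],[1,0]]` over `F₂ = ZMod 2`. -/
def M (a : ZMod 2) : Matrix (Fin 2) (Fin 2) (ZMod 2) := !![a, 1; 1, 0]

def B {n : ℕ} (ε : Fin n → ZMod 2) : Matrix (Fin 2) (Fin 2) (ZMod 2) :=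
  (List.ofFn (fun i => M (ε i))).prod

lemma B_cons {n : ℕ} (a : ZMod 2) (ε : Fin n → ZMod 2) :
    B (Fin.cons a ε) = M a * B ε := by
  simp [B, List.ofFn_succ]

lemma detM : ∀ a : ZMod 2, (M a).det = 1 := by decide

lemma detB {n : ℕ} (ε : Fin n → ZMod 2) : (B ε).det = 1 := by
  have : (B ε).det = ((List.ofFn fun i => M (ε i)).map Matrix.det).prod := by
    have h := map_list_prod (Matrix.detMonoidHom) (List.ofFn fun i => M (ε i))
    simpa [Matrix.coe_detMonoidHom, B] using h
  rw [this, List.map_ofFn, List.prod_ofFn]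
  simp [Function.comp, detM]

lemma col {n : ℕ} (ε : Fin n → ZMod 2) (h : B ε 0 0 = 0) : B ε 1 0 = 1 := by
  have hd := detB ε
  rw [Matrix.det_fin_two, h] at hd
  have key : ∀ x y z : ZMod 2, 0 * x - y * z = 1 → z = 1 := by decide
  exact key _ _ _ hd

lemma entry {n : ℕ} (a : ZMod 2) (ε : Fin n → ZMod 2) :
    B (Fin.cons a ε) 0 0 = a * B ε 0 0 + B ε 1 0 := by
  rw [B_cons, Matrix.mul_apply, Fin.sum_univ_two]
  simp [M]

lemma two_sum_aux (c d : ZMod 2) (h : c = 0 → d = 1) :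
    ∑ a : ZMod 2, (if a * c + d = 1 then (1:ℤ) else 0)
      = 2 - (if c = 1 then (1:ℤ) else 0) := by
  revert h; revert c d; decide

lemma card_as_sum (n : ℕ) :
    (Nat.card {ε : Fin n → ZMod 2 // B ε 0 0 = 1} : ℤ)
      = ∑ ε : Fin n → ZMod 2, (if B ε 0 0 = 1 then (1:ℤ) else 0) := by
  rw [Nat.card_eq_fintype_card, Fintype.card_subtype, Finset.card_filter]
  push_cast
  rfl

lemma step (n : ℕ) :
    (Nat.card {ε : Fin (n+1) → ZMod 2 // B ε 0 0 = 1} : ℤ)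
      = 2 ^ (n+1) - Nat.card {ε : Fin n → ZMod 2 // B ε 0 0 = 1} := by
  rw [card_as_sum, card_as_sum]
  have he : ∑ ε : Fin (n+1) → ZMod 2, (if B ε 0 0 = 1 then (1:ℤ) else 0)
      = ∑ p : ZMod 2 × (Fin n → ZMod 2),
          (if B (Fin.cons p.1 p.2) 0 0 = 1 then (1:ℤ) else 0) :=
    (Fintype.sum_equiv (Fin.consEquiv fun _ : Fin (n+1) => ZMod 2)
      (fun p => if B (Fin.cons p.1 p.2) 0 0 = 1 then (1:ℤ) else 0)
      (fun ε => if B ε 0 0 = 1 then (1:ℤ) else 0) (fun p => rfl)).symm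
  rw [he, Fintype.sum_prod_type, Finset.sum_comm]
  have hinner : ∀ ε : Fin n → ZMod 2,
      ∑ a : ZMod 2, (if B (Fin.cons a ε) 0 0 = 1 then (1:ℤ) else 0)
        = 2 - (if B ε 0 0 = 1 then (1:ℤ) else 0) := by
    intro ε
    have : ∀ a : ZMod 2, B (Fin.cons a ε) 0 0 = a * B ε 0 0 + B ε 1 0 :=
      fun a => entry a ε
    simp only [this]
    exact two_sum_aux _ _ (col ε)
  rw [Finset.sum_congr rfl (fun ε _ => hinner ε), Finset.sum_sub_distrib]
  simp [Finset.card_univ, pow_succ]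

/-- The number `A_n` of augmentation vectors `(ε_1, …, ε_n) ∈ F₂ⁿ`, i.e. vectors for
which the `(0,0)` entry of the ordered product `M(ε_1)·M(ε_2)⋯M(ε_n)` equals `1`,
satisfies `3·A_n = 2^{n+1} − (−1)^{n+1}`. -/
theorem card_augmentations (n : ℕ) (hn : 1 ≤ n) :
    (3 : ℤ) * Nat.card {ε : Fin n → ZMod 2 //
        (List.ofFn (fun i => M (ε i))).prod 0 0 = 1}
      = 2 ^ (n + 1) - (-1) ^ (n + 1) := by
  have key : ∀ m : ℕ, (3 : ℤ) * Nat.card {ε : Fin m → ZMod 2 // B ε 0 0 = 1}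
      = 2 ^ (m + 1) - (-1) ^ (m + 1) := by
    intro m
    induction m with
    | zero =>
      have h1 : Nat.card {ε : Fin 0 → ZMod 2 // B ε 0 0 = 1} = 1 := by
        rw [Nat.card_eq_fintype_card]; decide
      rw [h1]; norm_num
    | succ k ih =>
      rw [step]
      have h2 : ((-1 : ℤ)) ^ (k + 1 + 1) = -(-1) ^ (k + 1) := by ring
      have h3 : (2 : ℤ) ^ (k + 1 + 1) = 2 * 2 ^ (k + 1) := by ring
      rw [h2, h3]
      linarith [ih]
  exact key n
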